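/- arXiv:1506.05231 — 2 statements merged into one kernel-verified Lean document; each statement's English description precedes it below -/
import Mathlib

section
/- For every ε ∈ (0,1), the sets G_ε and B_ε are Lebesgue measurable, with Lebesgue measures λ(G_ε) = 1 − ε and λ(B_ε) = ε (i.e., the set of good channels has measure equal to the capacity 1 − ε of the binary erasure channel, and the set of bad channels has the complementary measure). -/
open Filter Set MeasureTheory

noncomputable section

/-- `g_0(z) = 2z - z²` (bit `false`), `g_1(z) = z²` (bit `true`). -/
def gBit (c : Bool) (z : ℝ) : ℝ := if c then z ^ 2 else 2 * z - z ^ 2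

/-- `pPre b n z = g_{b_n}(g_{b_{n-1}}(⋯ g_{b_1}(z) ⋯))`, where `b_i` is `b (i-1)`. -/
def pPre (b : ℕ → Bool) : ℕ → ℝ → ℝ
  | 0, z => z
  | n + 1, z => gBit (b n) (pPre b n z)

/-- `f(b) = Σ_{n ≥ 1} b_n 2^{-n}`. -/
def fBin (b : ℕ → Bool) : ℝ := ∑' n : ℕ, (if b n then (1 : ℝ) else 0) / 2 ^ (n + 1)

/-- The dyadic rationals in `[0,1]`. -/
def dyadics : Set ℝ := Set.Icc 0 1 ∩ {x : ℝ | ∃ (p : ℤ) (n : ℕ), x = (p : ℝ) / 2 ^ n}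

/-- The good channels of a BEC with erasure probability `ε`: `x ∈ [0,1]` such that some binary
expansion `b` of `x` satisfies `p_{b^n}(ε) → 0`. -/
def Gset (ε : ℝ) : Set ℝ :=
  {x : ℝ | ∃ b : ℕ → Bool, fBin b = x ∧ Tendsto (fun n => pPre b n ε) atTop (nhds 0)}

/-- The bad channels of a BEC with erasure probability `ε`: `x ∈ [0,1]` such that some binary
expansion `b` of `x` satisfies `p_{b^n}(ε) → 1`. -/
def Bset (ε : ℝ) : Set ℝ :=
  {x : ℝ | ∃ b : ℕ → Bool, fBin b = x ∧ Tendsto (fun n => pPre b n ε) atTop (nhds 1)}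

/-- Hamming weight `w(b^n)` of the length-`n` prefix of `b`. -/
def wPre (b : ℕ → Bool) (n : ℕ) : ℕ := ∑ i ∈ Finset.range n, (if b i then 1 else 0)

/-- `b` is `ρ`-heavy: `liminf_{n→∞} (w(b^n) - nρ) ≥ 0` (the liminf computed in `EReal`),
equivalently `liminf 2^{w(b^n)} / 2^{nρ} ≥ 1`. -/
def Heavy (ρ : ℝ) (b : ℕ → Bool) : Prop :=
  0 ≤ atTop.liminf (fun n : ℕ => (((wPre b n : ℝ) - n * ρ : ℝ) : EReal))

/-- The set of `ρ`-heavy channels. -/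
def Hset (ρ : ℝ) : Set ℝ := {x : ℝ | ∃ b : ℕ → Bool, fBin b = x ∧ Heavy ρ b}


/-! Read the binary digits of `x ∈ [0, 1)` as fair coin flips. Under Lebesgue measure on `[0, 1)`,
`Z_n(x) = p_{b^n}(ε)`, with `b` the digits of `x`, is a martingale for the dyadic filtration,
because `(g_0(z) + g_1(z)) / 2 = z`. It takes values in `[0, 1]`, so it converges almost everywhere
(Doob), and since `|Z_{n+1} - Z_n| = Z_n (1 - Z_n)` the limit is `0` or `1`. The mean stays `ε`, so
by dominated convergence the limit is `1` on a set of measure `ε` and `0` on a set of measure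
`1 - ε`. Off the countable set of dyadic rationals the binary expansion is unique, so `G_ε` and
`B_ε` differ from these two sets by countable sets. -/

open Topology

lemma gBit_mem_Icc (c : Bool) {z : ℝ} (hz : z ∈ Icc (0 : ℝ) 1) : gBit c z ∈ Icc (0 : ℝ) 1 := by
  obtain ⟨h0, h1⟩ := hz
  cases c <;> simp only [gBit, Bool.false_eq_true, if_false, if_true, mem_Icc] <;>
    constructor <;> nlinarith

lemma pPre_mem_Icc (b : ℕ → Bool) {z : ℝ} (hz : z ∈ Icc (0 : ℝ) 1) (n : ℕ) :
    pPre b n z ∈ Icc (0 : ℝ) 1 := by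
  induction n with
  | zero => exact hz
  | succ n ih => exact gBit_mem_Icc _ ih

lemma pPre_congr {b b' : ℕ → Bool} {n : ℕ} (h : ∀ i < n, b i = b' i) (z : ℝ) :
    pPre b n z = pPre b' n z := by
  induction n with
  | zero => rfl
  | succ n ih =>
    simp only [pPre]
    rw [ih fun i hi ↦ h i (by omega), h n (by omega)]

lemma gBit_false_add_gBit_true (z : ℝ) : gBit false z + gBit true z = 2 * z := by
  simp only [gBit, Bool.false_eq_true, if_false, if_true]
  ring

lemma abs_gBit_sub_self (c : Bool) {z : ℝ} (hz : z ∈ Icc (0 : ℝ) 1) :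
    |gBit c z - z| = z * (1 - z) := by
  obtain ⟨h0, h1⟩ := hz
  cases c <;> simp only [gBit, Bool.false_eq_true, if_false, if_true]
  · rw [abs_of_nonneg (by nlinarith)]; ring
  · rw [abs_of_nonpos (by nlinarith)]; ring

lemma eq_zero_or_eq_one_of_tendsto_pPre {b : ℕ → Bool} {z L : ℝ} (hz : z ∈ Icc (0 : ℝ) 1)
    (h : Tendsto (fun n ↦ pPre b n z) atTop (𝓝 L)) : L = 0 ∨ L = 1 := by
  have hstep : Tendsto (fun n ↦ |pPre b (n + 1) z - pPre b n z|) atTop (𝓝 0) := by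
    simpa using ((h.comp (tendsto_add_atTop_nat 1)).sub h).abs
  have hprod : Tendsto (fun n ↦ pPre b n z * (1 - pPre b n z)) atTop (𝓝 (L * (1 - L))) :=
    h.mul (tendsto_const_nhds.sub h)
  have hL : L * (1 - L) = 0 :=
    tendsto_nhds_unique hprod (hstep.congr fun n ↦ abs_gBit_sub_self _ (pPre_mem_Icc b hz n))
  rcases mul_eq_zero.1 hL with h0 | h1
  exacts [Or.inl h0, Or.inr (by linarith)]

namespace Real

theorem eq_digits_of_ofDigits_eq {b : ℕ} [NeZero b] {a : ℕ → Fin b} {x : ℝ}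
    (hx : ofDigits a = x) (hnot : ∀ p n : ℕ, x ≠ p / b ^ n) : a = digits x b := by
  have hb : (0 : ℝ) < b := by exact_mod_cast NeZero.pos b
  have hx01 : x ∈ Ico 0 1 :=
    ⟨hx ▸ ofDigits_nonneg a, (hx ▸ ofDigits_le_one a).lt_of_ne (by simpa using hnot 1 0)⟩
  funext n
  induction n using Nat.strong_induction_on with | _ n ih => ?_
  set k := ⌊(b : ℝ) ^ n * x⌋₊
  set t := ofDigits (fun i ↦ a (i + (n + 1)))
  have hprefix : (b : ℝ) ^ n * ∑ i ∈ Finset.range n, ofDigitsTerm a i = k := by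
    rw [← ofDigits_digits_sum_eq hx01 n]
    congr 1
    exact Finset.sum_congr rfl fun i hi ↦ by
      simp only [ofDigitsTerm, ih i (Finset.mem_range.mp hi)]
  have hsplit : (b : ℝ) ^ (n + 1) * x = b * k + a n + t := by
    rw [← hx, ofDigits_eq_sum_add_ofDigits a (n + 1), Finset.sum_range_succ, ← hprefix,
      ofDigitsTerm]
    field_simp
    ring
  -- `x` is not `b`-adic, so the tail `t ∈ [0, 1]` is neither `0` nor `1`.
  have ht0 : t ≠ 0 := fun h ↦ hnot (b * k + a n) (n + 1) <| by
    rw [eq_div_iff (by positivity), mul_comm, hsplit, h]; push_cast; ring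
  have ht1 : t ≠ 1 := fun h ↦ hnot (b * k + a n + 1) (n + 1) <| by
    rw [eq_div_iff (by positivity), mul_comm, hsplit, h]; push_cast; ring
  have hfloor : ⌊x * (b : ℝ) ^ (n + 1)⌋₊ = b * k + a n := by
    rw [Nat.floor_eq_iff (by have := hx01.1; positivity), mul_comm x, hsplit]
    have := (ofDigits_nonneg _).lt_of_ne (Ne.symm ht0)
    have := (ofDigits_le_one (fun i ↦ a (i + (n + 1)))).lt_of_ne ht1
    push_cast
    constructor <;> linarith
  ext
  rw [digits, hfloor, Fin.val_ofNat, Nat.mul_add_mod, Nat.mod_eq_of_lt (a n).isLt]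

end Real

def binaryDigits (x : ℝ) : ℕ → Bool := finTwoEquiv ∘ Real.digits x 2

lemma fBin_eq_ofDigits (b : ℕ → Bool) : fBin b = Real.ofDigits (finTwoEquiv.symm ∘ b) := by
  refine tsum_congr fun n ↦ ?_
  cases hbn : b n <;> simp [Real.ofDigitsTerm, finTwoEquiv, div_eq_mul_inv, hbn]

lemma fBin_mem_Icc (b : ℕ → Bool) : fBin b ∈ Icc (0 : ℝ) 1 := by
  rw [fBin_eq_ofDigits]
  exact ⟨Real.ofDigits_nonneg _, Real.ofDigits_le_one _⟩

lemma fBin_binaryDigits {x : ℝ} (hx : x ∈ Ico (0 : ℝ) 1) : fBin (binaryDigits x) = x := by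
  rw [fBin_eq_ofDigits, binaryDigits, ← Function.comp_assoc, Equiv.symm_comp_self,
    Function.id_comp, Real.ofDigits_digits one_lt_two hx]

lemma eq_binaryDigits_of_fBin_eq {b : ℕ → Bool} {x : ℝ} (hb : fBin b = x) (hx : x ∉ dyadics) :
    b = binaryDigits x := by
  have hnot : ∀ p n : ℕ, x ≠ p / (2 : ℕ) ^ n := fun p n h ↦
    hx ⟨hb ▸ fBin_mem_Icc b, p, n, by rw [h]; push_cast; rfl⟩
  rw [binaryDigits, ← Real.eq_digits_of_ofDigits_eq ((fBin_eq_ofDigits b).symm.trans hb) hnot,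
    ← Function.comp_assoc, Equiv.self_comp_symm, Function.id_comp]

local notation "μ₀" => volume.restrict (Ico (0 : ℝ) 1)

def dyadicIndex (n : ℕ) (x : ℝ) : ℕ := ⌊x * 2 ^ n⌋₊

lemma dyadicIndex_add_div (n k : ℕ) (x : ℝ) :
    dyadicIndex (n + k) x / 2 ^ k = dyadicIndex n x := by
  rw [dyadicIndex, dyadicIndex, ← Nat.floor_div_natCast, pow_add]
  push_cast
  rw [← mul_assoc, mul_div_cancel_right₀ _ (by positivity)]

lemma measurable_dyadicIndex (n : ℕ) : Measurable (dyadicIndex n) :=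
  (measurable_id.mul_const _).nat_floor

lemma binaryDigits_eq_of_lt {i n : ℕ} (hi : i < n) (x : ℝ) :
    binaryDigits x i = finTwoEquiv (Fin.ofNat 2 (dyadicIndex n x / 2 ^ (n - (i + 1)))) := by
  obtain ⟨k, rfl⟩ : ∃ k, n = (i + 1) + k := ⟨n - (i + 1), by omega⟩
  rw [Nat.add_sub_cancel_left, dyadicIndex_add_div]
  rfl

lemma binaryDigits_of_dyadicIndex_eq {n m : ℕ} {c : Bool} {x : ℝ}
    (h : dyadicIndex (n + 1) x = 2 * m + c.toNat) : binaryDigits x n = c := by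
  rw [binaryDigits_eq_of_lt n.lt_succ_self, Nat.sub_self, pow_zero, Nat.div_one, h]
  cases c <;> simp [finTwoEquiv, Fin.ext_iff]

lemma dyadicIndex_preimage_eq_union (n m : ℕ) :
    dyadicIndex n ⁻¹' {m} =
      dyadicIndex (n + 1) ⁻¹' {2 * m} ∪ dyadicIndex (n + 1) ⁻¹' {2 * m + 1} := by
  ext x
  have h := dyadicIndex_add_div n 1 x
  simp only [mem_preimage, mem_singleton_iff, mem_union]
  omega

instance : IsProbabilityMeasure μ₀ := ⟨by simp⟩

lemma measureReal_dyadicIndex_preimage (n m : ℕ) :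
    (μ₀).real (dyadicIndex n ⁻¹' {m}) = if m < 2 ^ n then (2 ^ n)⁻¹ else 0 := by
  have h2 : (0 : ℝ) < 2 ^ n := by positivity
  have hcell : dyadicIndex n ⁻¹' {m} ∩ Ico 0 1 =
      if m < 2 ^ n then Ico ((m : ℝ) / 2 ^ n) ((m + 1) / 2 ^ n) else ∅ := by
    ext x
    split_ifs with hm <;>
      simp only [mem_inter_iff, mem_preimage, mem_singleton_iff, mem_Ico, dyadicIndex]
    · have hm' : (m : ℝ) + 1 ≤ 2 ^ n := by exact_mod_cast hm
      constructor
      · rintro ⟨hfl, hx0, -⟩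
        rw [Nat.floor_eq_iff (by positivity)] at hfl
        rw [div_le_iff₀ h2, lt_div_iff₀ h2]
        exact hfl
      · rintro ⟨hlo, hhi⟩
        have hx0 : 0 ≤ x := le_trans (by positivity) hlo
        refine ⟨?_, hx0, hhi.trans_le ((div_le_one h2).2 hm')⟩
        rw [div_le_iff₀ h2] at hlo
        rw [lt_div_iff₀ h2] at hhi
        rw [Nat.floor_eq_iff (by positivity)]
        exact ⟨hlo, hhi⟩
    · simp only [mem_empty_iff_false, iff_false, not_and]
      intro hfl hx0 hx1
      have : ⌊x * 2 ^ n⌋₊ < 2 ^ n := by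
        rw [Nat.floor_lt (by positivity)]
        push_cast
        nlinarith
      omega
  rw [measureReal_def,
    Measure.restrict_apply (measurable_dyadicIndex n (measurableSet_singleton m)), hcell]
  split_ifs with hm
  · rw [Real.volume_Ico, ENNReal.toReal_ofReal (by rw [← sub_div, add_sub_cancel_left]; positivity)]
    field_simp; ring
  · simp

lemma measureReal_dyadicIndex_succ_preimage (n m : ℕ) (c : Bool) :
    (μ₀).real (dyadicIndex (n + 1) ⁻¹' {2 * m + c.toNat}) =
      (μ₀).real (dyadicIndex n ⁻¹' {m}) / 2 := by
  have hc := c.toNat_le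
  have hiff : 2 * m + c.toNat < 2 ^ (n + 1) ↔ m < 2 ^ n := by rw [pow_succ]; omega
  rw [measureReal_dyadicIndex_preimage, measureReal_dyadicIndex_preimage]
  split_ifs <;> first | omega | (rw [pow_succ]; ring) | simp

def dyadicFiltration : Filtration ℕ (inferInstance : MeasurableSpace ℝ) where
  seq n := MeasurableSpace.comap (dyadicIndex n) inferInstance
  mono' n n' h := MeasurableSpace.comap_le_comap_of_eq_comp (· / 2 ^ (n' - n)) measurable_from_nat
    (funext fun x ↦ by
      simp only [Function.comp_apply, ← dyadicIndex_add_div n (n' - n), Nat.add_sub_cancel' h])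
  le' n := (measurable_dyadicIndex n).comap_le

lemma Function.FactorsThrough.measurable_comap {α β γ : Type*} [MeasurableSpace β]
    [DiscreteMeasurableSpace β] [MeasurableSpace γ] [Nonempty γ] {f : α → β} {g : α → γ}
    (h : g.FactorsThrough f) : Measurable[MeasurableSpace.comap f inferInstance] g := by
  rw [← h.extend_comp fun _ ↦ Classical.arbitrary γ]
  exact Measurable.of_discrete.comp (comap_measurable f)

def erasureProcess (ε : ℝ) (n : ℕ) (x : ℝ) : ℝ := pPre (binaryDigits x) n ε

lemma erasureProcess_factorsThrough (ε : ℝ) (n : ℕ) :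
    (erasureProcess ε n).FactorsThrough (dyadicIndex n) := fun x y h ↦
  pPre_congr (fun i hi ↦ by rw [binaryDigits_eq_of_lt hi, binaryDigits_eq_of_lt hi, h]) ε

lemma stronglyAdapted_erasureProcess (ε : ℝ) :
    StronglyAdapted dyadicFiltration (erasureProcess ε) := fun n ↦
  (erasureProcess_factorsThrough ε n).measurable_comap.stronglyMeasurable

lemma measurable_erasureProcess (ε : ℝ) (n : ℕ) : Measurable (erasureProcess ε n) :=
  ((stronglyAdapted_erasureProcess ε n).mono (dyadicFiltration.le n)).measurable

lemma integrable_erasureProcess {ε : ℝ} (hε : ε ∈ Icc (0 : ℝ) 1) (n : ℕ) :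
    Integrable (erasureProcess ε n) μ₀ := by
  refine .of_bound (measurable_erasureProcess ε n).aestronglyMeasurable 1 (ae_of_all _ fun x ↦ ?_)
  obtain ⟨h0, h1⟩ : erasureProcess ε n x ∈ Icc 0 1 := pPre_mem_Icc (binaryDigits x) hε n
  rwa [Real.norm_of_nonneg h0]

lemma setIntegral_erasureProcess_succ {ε : ℝ} (hε : ε ∈ Icc (0 : ℝ) 1) (n m : ℕ) :
    ∫ x in dyadicIndex n ⁻¹' {m}, erasureProcess ε (n + 1) x ∂μ₀ =
      ∫ x in dyadicIndex n ⁻¹' {m}, erasureProcess ε n x ∂μ₀ := by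
  set v := Function.extend (dyadicIndex n) (erasureProcess ε n) 0 m
  have hv : ∀ x, dyadicIndex n x = m → erasureProcess ε n x = v := fun x hx ↦ by
    rw [← (erasureProcess_factorsThrough ε n).extend_apply 0 x, hx]
  have hhalf (c : Bool) : ∫ x in dyadicIndex (n + 1) ⁻¹' {2 * m + c.toNat},
      erasureProcess ε (n + 1) x ∂μ₀ = (μ₀).real (dyadicIndex n ⁻¹' {m}) / 2 * gBit c v := by
    have hval : ∀ x ∈ dyadicIndex (n + 1) ⁻¹' {2 * m + c.toNat},
        erasureProcess ε (n + 1) x = gBit c v := fun x (hx : _ = _) ↦ by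
      have hm : dyadicIndex n x = m := by
        have := c.toNat_le
        rw [← dyadicIndex_add_div n 1, hx]
        omega
      rw [erasureProcess, pPre, binaryDigits_of_dyadicIndex_eq hx, ← erasureProcess, hv x hm]
    rw [setIntegral_congr_fun (measurable_dyadicIndex _ (measurableSet_singleton _)) hval,
      setIntegral_const, measureReal_dyadicIndex_succ_preimage, smul_eq_mul]
  have h0 := hhalf false
  have h1 := hhalf true
  simp only [Bool.toNat_false, Bool.toNat_true, add_zero] at h0 h1
  have hint := (integrable_erasureProcess hε (n + 1)).integrableOn (s := univ)
  rw [setIntegral_congr_fun (measurable_dyadicIndex _ (measurableSet_singleton _)) hv,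
    setIntegral_const, smul_eq_mul, dyadicIndex_preimage_eq_union,
    setIntegral_union ((disjoint_singleton.2 (by omega)).preimage _)
      (measurable_dyadicIndex _ (measurableSet_singleton _)) (hint.mono_set (subset_univ _))
      (hint.mono_set (subset_univ _)), h0, h1, ← dyadicIndex_preimage_eq_union]
  linear_combination (μ₀).real (dyadicIndex n ⁻¹' {m}) / 2 * gBit_false_add_gBit_true v

lemma martingale_erasureProcess {ε : ℝ} (hε : ε ∈ Icc (0 : ℝ) 1) :
    Martingale (erasureProcess ε) dyadicFiltration μ₀ := by
  refine martingale_of_setIntegral_eq_succ (stronglyAdapted_erasureProcess ε)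
    (integrable_erasureProcess hε) fun n s hs ↦ ?_
  obtain ⟨t, -, rfl⟩ := hs
  have hunion : dyadicIndex n ⁻¹' t = ⋃ m : t, dyadicIndex n ⁻¹' {(m : ℕ)} := by
    ext; simp
  have hdisj : Pairwise (Function.onFun Disjoint fun m : t ↦ dyadicIndex n ⁻¹' {(m : ℕ)}) :=
    fun m m' h ↦ (disjoint_singleton.2 (Subtype.coe_injective.ne h)).preimage _
  have hmeas (m : t) : MeasurableSet (dyadicIndex n ⁻¹' {(m : ℕ)}) :=
    measurable_dyadicIndex n (measurableSet_singleton _)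
  rw [hunion, integral_iUnion hmeas hdisj (integrable_erasureProcess hε n).integrableOn,
    integral_iUnion hmeas hdisj (integrable_erasureProcess hε (n + 1)).integrableOn]
  exact tsum_congr fun m ↦ (setIntegral_erasureProcess_succ hε n m).symm

section ZeroOneMartingale

variable {Ω : Type*} {m0 : MeasurableSpace Ω} {μ : Measure Ω} [IsProbabilityMeasure μ]
  {ℱ : Filtration ℕ m0} {Z : ℕ → Ω → ℝ}

lemma MeasureTheory.Martingale.ae_tendsto_zero_or_tendsto_one (hZ : Martingale Z ℱ μ)
    (hbd : ∀ n ω, Z n ω ∈ Icc (0 : ℝ) 1)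
    (hlim : ∀ ω L, Tendsto (fun n ↦ Z n ω) atTop (𝓝 L) → L = 0 ∨ L = 1) :
    ∀ᵐ ω ∂μ, Tendsto (fun n ↦ Z n ω) atTop (𝓝 0) ∨ Tendsto (fun n ↦ Z n ω) atTop (𝓝 1) := by
  have hL1 (n : ℕ) : eLpNorm (Z n) 1 μ ≤ (1 : NNReal) := by
    refine (eLpNorm_le_of_ae_bound (C := 1) (ae_of_all _ fun ω ↦ ?_)).trans (by simp)
    rw [Real.norm_of_nonneg (hbd n ω).1]
    exact (hbd n ω).2
  filter_upwards [hZ.submartingale.exists_ae_tendsto_of_bdd hL1] with ω ⟨L, hL⟩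
  rcases hlim ω L hL with rfl | rfl
  exacts [Or.inl hL, Or.inr hL]

lemma MeasureTheory.Martingale.measure_tendsto_one (hZ : Martingale Z ℱ μ)
    (hbd : ∀ n ω, Z n ω ∈ Icc (0 : ℝ) 1)
    (hlim : ∀ ω L, Tendsto (fun n ↦ Z n ω) atTop (𝓝 L) → L = 0 ∨ L = 1) :
    μ {ω | Tendsto (fun n ↦ Z n ω) atTop (𝓝 1)} = ENNReal.ofReal (∫ ω, Z 0 ω ∂μ) := by
  set A := {ω | Tendsto (fun n ↦ Z n ω) atTop (𝓝 1)}
  have hmeas (n : ℕ) : Measurable (Z n) := (hZ.stronglyMeasurable n).measurable.mono (ℱ.le n) le_rfl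
  have hA : MeasurableSet A := measurableSet_tendsto _ hmeas
  have hconv : ∀ᵐ ω ∂μ, Tendsto (fun n ↦ Z n ω) atTop (𝓝 (A.indicator 1 ω)) := by
    filter_upwards [hZ.ae_tendsto_zero_or_tendsto_one hbd hlim] with ω h
    rcases h with h0 | h1
    · rwa [indicator_of_notMem fun h1 : ω ∈ A ↦ zero_ne_one (tendsto_nhds_unique h0 h1)]
    · rwa [indicator_of_mem h1]
  have hmean : Tendsto (fun n ↦ ∫ ω, Z n ω ∂μ) atTop (𝓝 (μ.real A)) := by
    rw [← integral_indicator_one hA]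
    refine tendsto_integral_of_dominated_convergence (fun _ ↦ 1)
      (fun n ↦ (hmeas n).aestronglyMeasurable) (integrable_const 1)
      (fun n ↦ ae_of_all _ fun ω ↦ ?_) hconv
    rw [Real.norm_of_nonneg (hbd n ω).1]
    exact (hbd n ω).2
  have hconst (n : ℕ) : ∫ ω, Z n ω ∂μ = ∫ ω, Z 0 ω ∂μ := by
    simpa using (hZ.setIntegral_eq (Nat.zero_le n) MeasurableSet.univ).symm
  simp only [hconst] at hmean
  rw [← ofReal_measureReal, tendsto_nhds_unique hmean tendsto_const_nhds]

lemma MeasureTheory.Martingale.measure_tendsto_zero (hZ : Martingale Z ℱ μ)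
    (hbd : ∀ n ω, Z n ω ∈ Icc (0 : ℝ) 1)
    (hlim : ∀ ω L, Tendsto (fun n ↦ Z n ω) atTop (𝓝 L) → L = 0 ∨ L = 1) :
    μ {ω | Tendsto (fun n ↦ Z n ω) atTop (𝓝 0)} = ENNReal.ofReal (1 - ∫ ω, Z 0 ω ∂μ) := by
  have hmeas (n : ℕ) : Measurable (Z n) := (hZ.stronglyMeasurable n).measurable.mono (ℱ.le n) le_rfl
  set A := {ω | Tendsto (fun n ↦ Z n ω) atTop (𝓝 1)}
  have hcompl : {ω | Tendsto (fun n ↦ Z n ω) atTop (𝓝 0)} =ᵐ[μ] (Aᶜ : Set Ω) := by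
    filter_upwards [hZ.ae_tendsto_zero_or_tendsto_one hbd hlim] with ω h
    exact propext ⟨fun h0 h1 ↦ zero_ne_one (tendsto_nhds_unique h0 h1), h.resolve_right⟩
  have hnonneg : 0 ≤ ∫ ω, Z 0 ω ∂μ := integral_nonneg fun ω ↦ (hbd 0 ω).1
  rw [measure_congr hcompl, prob_compl_eq_one_sub (measurableSet_tendsto _ hmeas),
    hZ.measure_tendsto_one hbd hlim, ENNReal.ofReal_sub _ hnonneg, ENNReal.ofReal_one]

end ZeroOneMartingale

lemma Set.Countable.measurableSet_of_diff_eq {α : Type*} [MeasurableSpace α]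
    [MeasurableSingletonClass α] {s t D : Set α} (hD : D.Countable) (ht : MeasurableSet t)
    (h : s \ D = t \ D) : MeasurableSet s := by
  rw [← sdiff_union_inter s D, h]
  exact (ht.diff hD.measurableSet).union (hD.mono inter_subset_right).measurableSet

lemma Set.Countable.measure_eq_of_diff_eq {α : Type*} [MeasurableSpace α]
    [MeasurableSingletonClass α] {μ : Measure α} [NullSingletonClass μ] {s t D : Set α}
    (hD : D.Countable) (h : s \ D = t \ D) : μ s = μ t :=
  measure_congr <| (sdiff_null_ae_eq_self (hD.measure_zero μ)).symm.trans <|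
    h ▸ sdiff_null_ae_eq_self (hD.measure_zero μ)

lemma countable_dyadics : dyadics.Countable :=
  (countable_range fun p : ℤ × ℕ ↦ (p.1 : ℝ) / 2 ^ p.2).mono fun _ ⟨_, p, n, hx⟩ ↦
    mem_range.2 ⟨(p, n), hx.symm⟩

def limitSet (ε L : ℝ) : Set ℝ :=
  {x | ∃ b : ℕ → Bool, fBin b = x ∧ Tendsto (fun n ↦ pPre b n ε) atTop (𝓝 L)}

lemma limitSet_diff_dyadics (ε L : ℝ) :
    limitSet ε L \ dyadics =
      ({x | Tendsto (fun n ↦ erasureProcess ε n x) atTop (𝓝 L)} ∩ Ico 0 1) \ dyadics := by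
  ext x
  refine and_congr_left fun hx ↦
    ⟨fun ⟨b, hb, hL⟩ ↦ ?_, fun ⟨hL, hx01⟩ ↦ ⟨_, fBin_binaryDigits hx01, hL⟩⟩
  obtain rfl := eq_binaryDigits_of_fBin_eq hb hx
  have hx1 : x ≠ 1 := fun h ↦ hx (h ▸ ⟨⟨zero_le_one, le_rfl⟩, 1, 0, by norm_num⟩)
  exact ⟨hL, (hb ▸ fBin_mem_Icc _).1, ((hb ▸ fBin_mem_Icc _).2).lt_of_ne hx1⟩

lemma measurableSet_limitSet (ε L : ℝ) : MeasurableSet (limitSet ε L) :=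
  countable_dyadics.measurableSet_of_diff_eq
    ((measurableSet_tendsto _ (measurable_erasureProcess ε)).inter measurableSet_Ico)
    (limitSet_diff_dyadics ε L)

lemma volume_limitSet (ε L : ℝ) :
    volume (limitSet ε L) = μ₀ {x | Tendsto (fun n ↦ erasureProcess ε n x) atTop (𝓝 L)} := by
  rw [Measure.restrict_apply (measurableSet_tendsto _ (measurable_erasureProcess ε))]
  exact countable_dyadics.measure_eq_of_diff_eq (limitSet_diff_dyadics ε L)

/-- `G_ε` and `B_ε` are Lebesgue measurable with `λ(G_ε) = 1 - ε` (the BEC capacity) and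
`λ(B_ε) = ε`. -/
theorem good_bad_lebesgue_measure :
    ∀ ε ∈ Set.Ioo (0 : ℝ) 1,
      MeasurableSet (Gset ε) ∧ MeasurableSet (Bset ε) ∧
      volume (Gset ε) = ENNReal.ofReal (1 - ε) ∧ volume (Bset ε) = ENNReal.ofReal ε := by
  intro ε hε
  have hε' : ε ∈ Icc (0 : ℝ) 1 := Ioo_subset_Icc_self hε
  have hZ := martingale_erasureProcess hε'
  have hbd (n : ℕ) (x : ℝ) := pPre_mem_Icc (binaryDigits x) hε' n
  have hlim (x L : ℝ) := eq_zero_or_eq_one_of_tendsto_pPre (b := binaryDigits x) (L := L) hε'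
  have hmean : ∫ x, erasureProcess ε 0 x ∂μ₀ = ε := by simp [erasureProcess, pPre]
  refine ⟨measurableSet_limitSet ε 0, measurableSet_limitSet ε 1, ?_, ?_⟩
  · rw [Gset, ← limitSet, volume_limitSet, hZ.measure_tendsto_zero hbd hlim, hmean]
  · rw [Bset, ← limitSet, volume_limitSet, hZ.measure_tendsto_one hbd hlim, hmean]

end
end

section
/- Let φ = (√5 − 1)/2 and let b = (1,0,1,0,1,0,…) be the alternating binary sequence (the binary expansion of 2/3). Then p_{(1,0)}(z) = g_0(g_1(z)) = 2z^2 − z^4, the only roots of 2z^2 − z^4 − z in [0,1] are 0, 1 and φ, and p_{b^{2m}}(φ) = φ for every m ≥ 0; consequently the sequence (p_{b^n}(φ))_{n≥1} converges neither to 0 nor to 1, so the point 2/3 belongs neither to G_φ nor to B_φ. -/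
open Filter Set MeasureTheory

noncomputable section

/-!
The binary expansion of `2/3` is forced: the doubling map swaps `2/3` and `1/3`, so the only
expansion is `(1,0,1,0,…)`. Two steps of the channel transform along it give `z ↦ 2z² - z⁴`, and
since `2z² - z⁴ - z = -z(z - 1)(z + ψ)(z + φ)` (golden ratio `φ`, conjugate `ψ`), the number
`-ψ = (√5 - 1)/2` is a fixed point of it. So `p_{b^{2m}}(-ψ) = -ψ` for all `m`, which rules out
the limits `0` and `1` along every expansion of `2/3`.
-/

abbrev altBits : ℕ → Bool := fun i => decide (i % 2 = 0)

section fBin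

variable (b : ℕ → Bool)

lemma bit_div_two_pow_nonneg (c : Bool) (n : ℕ) :
    0 ≤ (if c then (1 : ℝ) else 0) / 2 ^ (n + 1) := by
  split <;> positivity

lemma bit_div_two_pow_le (c : Bool) (n : ℕ) :
    (if c then (1 : ℝ) else 0) / 2 ^ (n + 1) ≤ 1 / 2 / 2 ^ n := by
  rw [div_div, ← pow_succ']
  gcongr
  split <;> norm_num

lemma summable_fBin : Summable fun n => (if b n then (1 : ℝ) else 0) / 2 ^ (n + 1) :=
  (summable_geometric_two' 1).of_nonneg_of_le (fun n => bit_div_two_pow_nonneg _ n)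
    (fun n => bit_div_two_pow_le _ n)

lemma fBin_nonneg : 0 ≤ fBin b :=
  tsum_nonneg fun n => bit_div_two_pow_nonneg _ n

lemma fBin_le_one : fBin b ≤ 1 :=
  calc fBin b ≤ ∑' n : ℕ, (1 : ℝ) / 2 / 2 ^ n :=
        (summable_fBin b).tsum_le_tsum (fun n => bit_div_two_pow_le _ n) (summable_geometric_two' 1)
    _ = 1 := tsum_geometric_two' 1

lemma fBin_eq_head_add_tail :
    fBin b = ((if b 0 then (1 : ℝ) else 0) + fBin (fun i => b (i + 1))) / 2 := by
  rw [fBin, (summable_fBin b).tsum_eq_zero_add, fBin, add_div, ← tsum_div_const]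
  congr 1
  · norm_num
  · exact tsum_congr fun n => by rw [pow_succ _ (n + 1), div_div]

lemma head_eq_true_of_half_lt_fBin (h : 1 / 2 < fBin b) : b 0 = true := by
  by_contra hb
  rw [fBin_eq_head_add_tail, if_neg hb] at h
  linarith [fBin_le_one fun i => b (i + 1)]

lemma head_eq_false_of_fBin_lt_half (h : fBin b < 1 / 2) : b 0 = false := by
  by_contra hb
  rw [fBin_eq_head_add_tail, if_pos (Bool.eq_true_of_not_eq_false hb)] at h
  linarith [fBin_nonneg fun i => b (i + 1)]

lemma bits_of_fBin_eq_two_thirds (h : fBin b = 2 / 3) :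
    b 0 = true ∧ b 1 = false ∧ fBin (fun i => b (i + 2)) = 2 / 3 := by
  have h0 : b 0 = true := head_eq_true_of_half_lt_fBin b (by linarith)
  have htail : fBin (fun i => b (i + 1)) = 1 / 3 := by
    rw [fBin_eq_head_add_tail, if_pos h0] at h
    linarith
  have h1 : b 1 = false := head_eq_false_of_fBin_lt_half (fun i => b (i + 1)) (by linarith)
  refine ⟨h0, h1, ?_⟩
  rw [fBin_eq_head_add_tail, h1, if_neg Bool.false_ne_true] at htail
  linarith

theorem eq_altBits_of_fBin_eq_two_thirds (h : fBin b = 2 / 3) : b = altBits := by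
  suffices ∀ m (b : ℕ → Bool), fBin b = 2 / 3 → b (2 * m) = true ∧ b (2 * m + 1) = false by
    funext i
    obtain ⟨m, rfl | rfl⟩ := Nat.even_or_odd' i
    · simpa [altBits] using (this m b h).1
    · simpa [altBits, Nat.add_mod] using (this m b h).2
  intro m
  induction m with
  | zero => exact fun b h => (bits_of_fBin_eq_two_thirds b h).imp_right And.left
  | succ m ih =>
    intro b h
    simpa [Nat.mul_succ, add_right_comm _ 2 1] using ih _ (bits_of_fBin_eq_two_thirds b h).2.2

end fBin

theorem fBin_altBits : fBin altBits = 2 / 3 := by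
  have h := fBin_eq_head_add_tail altBits
  have h' := fBin_eq_head_add_tail fun i => altBits (i + 1)
  have hshift : (fun i => altBits (i + 1 + 1)) = altBits := by
    funext i; simp only [altBits, decide_eq_decide]; omega
  rw [if_pos (show altBits 0 = true from rfl)] at h
  rw [show altBits (0 + 1) = false from rfl, if_neg Bool.false_ne_true, hshift] at h'
  linarith

def quarticMap (z : ℝ) : ℝ := 2 * z ^ 2 - z ^ 4

lemma pPre_altBits_two_mul_add_two (m : ℕ) (z : ℝ) :
    pPre altBits (2 * m + 2) z = quarticMap (pPre altBits (2 * m) z) := by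
  simp only [pPre, gBit, altBits, Nat.add_mod, Nat.mul_mod_right, Nat.mod_succ, zero_add,
    one_ne_zero, decide_false, Bool.false_eq_true, ↓reduceIte, decide_true, quarticMap]
  ring

lemma pPre_altBits_two_mul (m : ℕ) (z : ℝ) : pPre altBits (2 * m) z = quarticMap^[m] z := by
  induction m with
  | zero => rfl
  | succ m ih =>
    rw [Function.iterate_succ_apply', ← ih, ← pPre_altBits_two_mul_add_two, mul_add_one]

lemma quarticMap_sub_self_eq_zero_iff {z : ℝ} (hz : 0 ≤ z) :
    quarticMap z - z = 0 ↔ z = 0 ∨ z = 1 ∨ z = -Real.goldenConj := by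
  have hfactor : quarticMap z - z =
      -(z * (z - 1) * ((z + Real.goldenConj) * (z + Real.goldenRatio))) := by
    unfold quarticMap
    linear_combination (z * (z - 1)) *
      (z * Real.goldenRatio_add_goldenConj + Real.goldenRatio_mul_goldenConj)
  have hφ : z + Real.goldenRatio ≠ 0 := (add_pos_of_nonneg_of_pos hz Real.goldenRatio_pos).ne'
  simp only [hfactor, neg_eq_zero, mul_eq_zero, hφ, or_false, sub_eq_zero, add_eq_zero_iff_eq_neg,
    or_assoc]

lemma quarticMap_neg_goldenConj : quarticMap (-Real.goldenConj) = -Real.goldenConj :=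
  sub_eq_zero.mp <| (quarticMap_sub_self_eq_zero_iff (neg_nonneg.mpr Real.goldenConj_neg.le)).mpr
    (Or.inr (Or.inr rfl))

lemma eq_of_tendsto_of_forall_two_mul_eq {α : Type*} [TopologicalSpace α] [T2Space α]
    {u : ℕ → α} {c L : α} (hu : ∀ m, u (2 * m) = c) (h : Tendsto u atTop (nhds L)) : L = c := by
  have hsub := h.comp (tendsto_id.const_mul_atTop' two_pos)
  simp only [Function.comp_def, id, hu] at hsub
  exact tendsto_nhds_unique hsub tendsto_const_nhds

/-- With `φ = (√5 - 1)/2` and `b = (1,0,1,0,…)` the binary expansion of `2/3`: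
`p_{(1,0)}(z) = 2z² - z⁴`, the only roots of `2z² - z⁴ - z` in `[0,1]` are `0`, `1`, `φ`,
`p_{b^{2m}}(φ) = φ` for all `m`, so `p_{b^n}(φ)` converges neither to `0` nor to `1`, and
`2/3` belongs neither to `G_φ` nor to `B_φ`. -/
theorem golden_ratio_fixed_point :
    let φ : ℝ := (Real.sqrt 5 - 1) / 2
    let b : ℕ → Bool := fun i => decide (i % 2 = 0)
    fBin b = 2 / 3 ∧
    (∀ z : ℝ, pPre b 2 z = 2 * z ^ 2 - z ^ 4) ∧
    (∀ z ∈ Set.Icc (0 : ℝ) 1, 2 * z ^ 2 - z ^ 4 - z = 0 ↔ (z = 0 ∨ z = 1 ∨ z = φ)) ∧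
    (∀ m : ℕ, pPre b (2 * m) φ = φ) ∧
    ¬ Tendsto (fun n => pPre b n φ) atTop (nhds 0) ∧
    ¬ Tendsto (fun n => pPre b n φ) atTop (nhds 1) ∧
    (2 / 3 : ℝ) ∉ Gset φ ∧ (2 / 3 : ℝ) ∉ Bset φ := by
  intro φ b
  have hφ : φ = -Real.goldenConj := by simp only [φ, Real.goldenConj]; ring
  clear_value φ
  subst hφ
  have hfix (m : ℕ) : pPre altBits (2 * m) (-Real.goldenConj) = -Real.goldenConj := by
    rw [pPre_altBits_two_mul, Function.iterate_fixed quarticMap_neg_goldenConj]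
  have hnot0 : ¬ Tendsto (fun n => pPre altBits n (-Real.goldenConj)) atTop (nhds 0) :=
    fun h => Real.goldenConj_ne_zero <|
      neg_eq_zero.mp (eq_of_tendsto_of_forall_two_mul_eq hfix h).symm
  have hnot1 : ¬ Tendsto (fun n => pPre altBits n (-Real.goldenConj)) atTop (nhds 1) := fun h => by
    linarith [eq_of_tendsto_of_forall_two_mul_eq hfix h, Real.neg_one_lt_goldenConj]
  refine ⟨fBin_altBits, pPre_altBits_two_mul_add_two 0, fun z hz =>
    quarticMap_sub_self_eq_zero_iff hz.1, hfix, hnot0, hnot1, ?_, ?_⟩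
  · rintro ⟨b', hb', ht⟩
    exact hnot0 (eq_altBits_of_fBin_eq_two_thirds b' hb' ▸ ht)
  · rintro ⟨b', hb', ht⟩
    exact hnot1 (eq_altBits_of_fBin_eq_two_thirds b' hb' ▸ ht)
end
end
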